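/- arXiv:2604.14658 — 2 statements merged into one kernel-verified Lean document; each statement's English description precedes it below -/
import Mathlib

section
/- Let p > 1 with conjugate exponent q, let a > 0, and let u : [0,a] × [0,c] → ℝ be C¹ with u(0, x₂) = 0 for all x₂ ∈ [0,c]. Then ∫∫_{[0,a]×[0,c]} |u(x₁,x₂)|^p dx₁ dx₂ ≤ a^(p/q + 1) ∫∫_{[0,a]×[0,c]} |∇u(x₁,x₂)|^p dx₁ dx₂. -/
/-!
Fix a horizontal line `x₂ = const`. Since `u` vanishes at `x₁ = 0`, the fundamental theorem of
calculus gives `|u(x₁, x₂)| ≤ ∫₀ᵃ |∂₁u(t, x₂)| dt`, and Hölder's inequality against the constant `1`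
bounds the `p`-th power of the right-hand side by `a^(p/q) ∫₀ᵃ |∇u(t, x₂)|^p dt`. Integrating this
bound over `x₁ ∈ [0,a]` costs one more factor `a`, and integrating over `x₂` (Fubini) finishes.
-/

open MeasureTheory Set

noncomputable abbrev E2 := EuclideanSpace ℝ (Fin 2)

/-- The rectangle `[0,a] × [0,c]` in the Euclidean plane. -/
def rect (a c : ℝ) : Set E2 := {x : E2 | x 0 ∈ Icc 0 a ∧ x 1 ∈ Icc 0 c}

section Holder

variable {α : Type*} [MeasurableSpace α] {μ : Measure α} [IsFiniteMeasure μ]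

theorem rpow_integral_le_measureReal_rpow_mul_integral_rpow {p q : ℝ}
    (hpq : p.HolderConjugate q) {f : α → ℝ} (hf0 : 0 ≤ᵐ[μ] f)
    (hf : MemLp f (ENNReal.ofReal p) μ) :
    (∫ x, f x ∂μ) ^ p ≤ μ.real univ ^ (p / q) * ∫ x, f x ^ p ∂μ := by
  have holder := integral_mul_le_Lp_mul_Lq_of_nonneg hpq hf0
    (ae_of_all _ fun _ => zero_le_one) hf (memLp_const (1 : ℝ))
  simp only [mul_one, Real.one_rpow, integral_const, smul_eq_mul] at holder
  have hfp : 0 ≤ ∫ x, f x ^ p ∂μ :=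
    integral_nonneg_of_ae (hf0.mono fun x hx => Real.rpow_nonneg hx p)
  calc (∫ x, f x ∂μ) ^ p ≤ ((∫ x, f x ^ p ∂μ) ^ (1 / p) * μ.real univ ^ (1 / q)) ^ p :=
        Real.rpow_le_rpow (integral_nonneg_of_ae hf0) holder hpq.nonneg
    _ = μ.real univ ^ (p / q) * ∫ x, f x ^ p ∂μ := by
        rw [Real.mul_rpow (by positivity) (by positivity), ← Real.rpow_mul hfp,
          ← Real.rpow_mul measureReal_nonneg, one_div_mul_cancel hpq.ne_zero, Real.rpow_one,
          one_div_mul_eq_div, mul_comm]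

end Holder

section Interval

variable {a : ℝ} {f f' : ℝ → ℝ}

theorem abs_le_integral_abs_deriv_of_eq_zero (hf0 : f 0 = 0)
    (hf : ∀ t ∈ Icc 0 a, HasDerivWithinAt f (f' t) (Icc 0 a) t)
    (hf' : ContinuousOn f' (Icc 0 a)) {s : ℝ} (hs : s ∈ Icc 0 a) :
    |f s| ≤ ∫ t in Icc 0 a, |f' t| := by
  have hsub : Icc 0 s ⊆ Icc 0 a := Icc_subset_Icc_right hs.2
  have hftc : ∫ t in (0 : ℝ)..s, f' t = f s := by
    rw [intervalIntegral.integral_eq_sub_of_hasDerivAt_of_le hs.1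
      (ContinuousOn.mono (fun t ht => (hf t ht).continuousWithinAt) hsub)
      (fun t ht => (hf t ⟨ht.1.le, ht.2.le.trans hs.2⟩).hasDerivAt
        (Icc_mem_nhds ht.1 (ht.2.trans_le hs.2)))
      ((hf'.mono hsub).intervalIntegrable_of_Icc hs.1), hf0, sub_zero]
  calc |f s| = |∫ t in Icc 0 s, f' t| := by
        rw [← hftc, intervalIntegral.integral_of_le hs.1, integral_Icc_eq_integral_Ioc]
    _ ≤ ∫ t in Icc 0 s, |f' t| := abs_integral_le_integral_abs
    _ ≤ ∫ t in Icc 0 a, |f' t| :=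
        setIntegral_mono_set hf'.abs.integrableOn_Icc (ae_of_all _ fun _ => abs_nonneg _)
          hsub.eventuallyLE

theorem integral_abs_rpow_le_integral_abs_deriv_rpow {p q : ℝ} (hpq : p.HolderConjugate q)
    (ha : 0 ≤ a) (hf0 : f 0 = 0) (hf : ∀ t ∈ Icc 0 a, HasDerivWithinAt f (f' t) (Icc 0 a) t)
    (hf' : ContinuousOn f' (Icc 0 a)) :
    ∫ t in Icc 0 a, |f t| ^ p ≤ a ^ (p / q + 1) * ∫ t in Icc 0 a, |f' t| ^ p := by
  have hvol : volume.real (Icc 0 a) = a := by simp [ha]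
  obtain ⟨C, hC⟩ := isCompact_Icc.exists_bound_of_continuousOn hf'.abs
  have hmem : MemLp (fun t => |f' t|) (ENNReal.ofReal p) (volume.restrict (Icc 0 a)) :=
    MemLp.of_bound (hf'.abs.aestronglyMeasurable measurableSet_Icc) C
      ((ae_restrict_iff' measurableSet_Icc).2 (ae_of_all _ hC))
  have hholder : (∫ t in Icc 0 a, |f' t|) ^ p ≤ a ^ (p / q) * ∫ t in Icc 0 a, |f' t| ^ p := by
    simpa [hvol] using rpow_integral_le_measureReal_rpow_mul_integral_rpow hpq
      (ae_of_all _ fun _ => abs_nonneg _) hmem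
  have hpoint : ∀ s ∈ Icc 0 a, ‖|f s| ^ p‖ ≤ a ^ (p / q) * ∫ t in Icc 0 a, |f' t| ^ p :=
    fun s hs => by
      rw [Real.norm_of_nonneg (by positivity)]
      exact (Real.rpow_le_rpow (abs_nonneg _) (abs_le_integral_abs_deriv_of_eq_zero hf0 hf hf' hs)
        hpq.nonneg).trans hholder
  calc ∫ t in Icc 0 a, |f t| ^ p ≤ ‖∫ t in Icc 0 a, |f t| ^ p‖ := Real.le_norm_self _
    _ ≤ a ^ (p / q) * (∫ t in Icc 0 a, |f' t| ^ p) * a := by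
        simpa [hvol] using
          norm_setIntegral_le_of_norm_le_const (μ := volume) measure_Icc_lt_top hpoint
    _ = a ^ (p / q + 1) * ∫ t in Icc 0 a, |f' t| ^ p := by
        rw [Real.rpow_add_one' ha (add_pos (div_pos hpq.pos hpq.symm.pos) one_pos).ne']; ring

end Interval

section Rectangle

variable {a c : ℝ}

noncomputable def coords : E2 ≃L[ℝ] ℝ × ℝ :=
  (EuclideanSpace.equiv (Fin 2) ℝ).trans (ContinuousLinearEquiv.finTwoArrow ℝ ℝ)

theorem measurePreserving_coords : MeasurePreserving coords :=
  (volume_preserving_finTwoArrow ℝ).comp (PiLp.volume_preserving_ofLp (Fin 2))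

theorem coords_symm_apply (z : ℝ × ℝ) : coords.symm z = !₂[z.1, z.2] := rfl

theorem rect_eq_preimage_coords : rect a c = coords ⁻¹' (Icc 0 a ×ˢ Icc 0 c) := rfl

theorem isCompact_rect : IsCompact (rect a c) :=
  coords.toHomeomorph.isCompact_preimage.2 (isCompact_Icc.prod isCompact_Icc)

theorem uniqueDiffOn_rect (ha : 0 < a) (hc : 0 < c) : UniqueDiffOn ℝ (rect a c) :=
  coords.uniqueDiffOn_preimage_iff.2 ((uniqueDiffOn_Icc ha).prod (uniqueDiffOn_Icc hc))

variable {E : Type*} [NormedAddCommGroup E] {G : E2 → E}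

theorem integrableOn_rect_iff : IntegrableOn G (rect a c) ↔
    Integrable (fun z : ℝ × ℝ => G !₂[z.1, z.2])
      ((volume.restrict (Icc 0 a)).prod (volume.restrict (Icc 0 c))) := by
  rw [Measure.prod_restrict, ← Measure.volume_eq_prod, ← IntegrableOn, rect_eq_preimage_coords,
    ← measurePreserving_coords.integrableOn_comp_preimage coords.toHomeomorph.measurableEmbedding]
  simp only [Function.comp_def, ← coords_symm_apply, ContinuousLinearEquiv.symm_apply_apply]

variable [NormedSpace ℝ E]

theorem setIntegral_rect_eq_integral_integral (hG : IntegrableOn G (rect a c)) :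
    ∫ x in rect a c, G x = ∫ x₂ in Icc 0 c, ∫ x₁ in Icc 0 a, G !₂[x₁, x₂] := by
  rw [← integral_prod_symm _ (integrableOn_rect_iff.1 hG), Measure.prod_restrict,
    ← Measure.volume_eq_prod, rect_eq_preimage_coords,
    ← measurePreserving_coords.setIntegral_preimage_emb coords.toHomeomorph.measurableEmbedding]
  simp only [← coords_symm_apply, ContinuousLinearEquiv.symm_apply_apply]

theorem MeasureTheory.IntegrableOn.integrableOn_integral_slice_rect
    (hG : IntegrableOn G (rect a c)) :
    IntegrableOn (fun x₂ => ∫ x₁ in Icc 0 a, G !₂[x₁, x₂]) (Icc 0 c) :=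
  (integrableOn_rect_iff.1 hG).integral_prod_right

end Rectangle

section Slice

variable {a c x₂ : ℝ} {u : E2 → ℝ}

theorem hasDerivWithinAt_slice_rect (hu : DifferentiableOn ℝ u (rect a c)) (hx₂ : x₂ ∈ Icc 0 c)
    {t : ℝ} (ht : t ∈ Icc 0 a) :
    HasDerivWithinAt (fun s => u !₂[s, x₂])
      (fderivWithin ℝ u (rect a c) !₂[t, x₂] !₂[1, 0]) (Icc 0 a) t := by
  have hline : HasDerivAt (fun s : ℝ => !₂[s, x₂]) !₂[1, 0] t :=
    coords.symm.hasFDerivAt.comp_hasDerivAt t ((hasDerivAt_id t).prodMk (hasDerivAt_const t x₂))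
  exact (hu _ ⟨ht, hx₂⟩).hasFDerivWithinAt.comp_hasDerivWithinAt t hline.hasDerivWithinAt
    fun s hs => ⟨hs, hx₂⟩

theorem integral_abs_rpow_slice_rect_le {p q : ℝ} (hpq : p.HolderConjugate q) (ha : 0 ≤ a)
    (hu : ContDiffOn ℝ 1 u (rect a c)) (hR : UniqueDiffOn ℝ (rect a c)) (hx₂ : x₂ ∈ Icc 0 c)
    (h0 : u !₂[0, x₂] = 0) :
    ∫ x₁ in Icc 0 a, |u !₂[x₁, x₂]| ^ p ≤
      a ^ (p / q + 1) * ∫ x₁ in Icc 0 a, ‖fderivWithin ℝ u (rect a c) !₂[x₁, x₂]‖ ^ p := by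
  have hslice : ContinuousOn (fun t => fderivWithin ℝ u (rect a c) !₂[t, x₂]) (Icc 0 a) :=
    (hu.continuousOn_fderivWithin hR le_rfl).comp
      (coords.symm.continuous.comp (Continuous.prodMk_left x₂)).continuousOn fun s hs => ⟨hs, hx₂⟩
  have hpartial : ∀ t, |fderivWithin ℝ u (rect a c) !₂[t, x₂] !₂[1, 0]| ≤
      ‖fderivWithin ℝ u (rect a c) !₂[t, x₂]‖ := fun t => by
    simpa [EuclideanSpace.norm_eq] using
      (fderivWithin ℝ u (rect a c) !₂[t, x₂]).le_opNorm !₂[1, 0]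
  refine (integral_abs_rpow_le_integral_abs_deriv_rpow hpq ha h0
    (fun t ht => hasDerivWithinAt_slice_rect (hu.differentiableOn one_ne_zero) hx₂ ht)
    (hslice.clm_apply continuousOn_const)).trans ?_
  gcongr ?_ * ?_
  refine setIntegral_mono_on ?_ ?_ measurableSet_Icc fun t _ =>
    Real.rpow_le_rpow (abs_nonneg _) (hpartial t) hpq.nonneg
  · exact ((hslice.clm_apply continuousOn_const).abs.rpow_const
      fun _ _ => Or.inr hpq.nonneg).integrableOn_Icc
  · exact (hslice.norm.rpow_const fun _ _ => Or.inr hpq.nonneg).integrableOn_Icc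

end Slice

/-- Friedrichs-type inequality on a strip: if `p > 1` has conjugate exponent `q`,
`a > 0`, and `u` is C¹ on `[0,a] × [0,c]` with `u(0,x₂) = 0` for all `x₂ ∈ [0,c]`, then
`∫∫ |u|^p ≤ a^(p/q+1) ∫∫ |∇u|^p`. -/
theorem stmt3 (p q a c : ℝ) (hp : 1 < p) (hpq : 1 / p + 1 / q = 1)
    (ha : 0 < a) (hc : 0 < c) (u : E2 → ℝ)
    (hu : ContDiffOn ℝ 1 u (rect a c))
    (h0 : ∀ x : E2, x 0 = 0 → x 1 ∈ Icc 0 c → u x = 0) :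
    ∫ x in rect a c, |u x| ^ p ≤
      a ^ (p / q + 1) * ∫ x in rect a c, ‖fderivWithin ℝ u (rect a c) x‖ ^ p := by
  have hpq' : p.HolderConjugate q :=
    Real.holderConjugate_iff.2 ⟨hp, by simpa only [one_div] using hpq⟩
  have hR := uniqueDiffOn_rect ha hc
  have hint_u : IntegrableOn (fun x => |u x| ^ p) (rect a c) :=
    (hu.continuousOn.abs.rpow_const fun _ _ => Or.inr hpq'.nonneg).integrableOn_compact
      isCompact_rect
  have hint_du : IntegrableOn (fun x => ‖fderivWithin ℝ u (rect a c) x‖ ^ p) (rect a c) :=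
    ((hu.continuousOn_fderivWithin hR le_rfl).norm.rpow_const
      fun _ _ => Or.inr hpq'.nonneg).integrableOn_compact isCompact_rect
  rw [setIntegral_rect_eq_integral_integral hint_u, setIntegral_rect_eq_integral_integral hint_du,
    ← integral_const_mul]
  exact setIntegral_mono_on hint_u.integrableOn_integral_slice_rect
    (hint_du.integrableOn_integral_slice_rect.const_mul _) measurableSet_Icc fun x₂ hx₂ =>
      integral_abs_rpow_slice_rect_le hpq' ha.le hu hR hx₂ (h0 _ rfl hx₂)
end

section
/- Let B = B(x₀, r) be a closed ball in ℝ² and u ∈ C¹ on a neighborhood of B. Then for every x ∈ B, |u(x) - u_B| ≤ 2 ∫_B |∇u(y)| / |x - y| dy, where u_B = (1/(π r²)) ∫_B u(y) dy is the average of u over B. -/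
/-!
Along the segment from `x` to `y`, `|u x - u y| ≤ ∫₀^{|y - x|} |∇u (x + t ω)| dt` with `ω` the
unit direction. Integrating over `y` in a convex `Ω ⊆ B(x, d)`, `d = diam Ω`, in polar coordinates
centred at `x`, the radial weight `ρ^(n-1)` integrates to `dⁿ / n` and the ray integrals that remain
reassemble, again in polar coordinates, into the Riesz potential `∫ |∇u z| |z - x|^(1-n) dz`.
Averaging over `Ω` gives `|u x - u_Ω| ≤ dⁿ / (n |Ω|) ∫_Ω |∇u y| |x - y|^(1-n) dy`; for a disc of
radius `r` in `ℝ²` the constant is `(2r)² / (2πr²) = 2/π ≤ 2`.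
-/

open MeasureTheory Metric

section PointwisePoincare

open Set Module Measure
open scoped ENNReal

theorem lintegral_Ioc_ofReal_pow {R : ℝ} (hR : 0 ≤ R) (k : ℕ) :
    ∫⁻ ρ in Ioc 0 R, ENNReal.ofReal (ρ ^ k) = ENNReal.ofReal (R ^ (k + 1) / (k + 1)) := by
  rw [← ofReal_integral_eq_lintegral_ofReal, ← intervalIntegral.integral_of_le hR, integral_pow]
  · simp
  · exact (continuous_pow k).integrableOn_Icc.mono_set Ioc_subset_Icc_self
  · filter_upwards [ae_restrict_mem measurableSet_Ioc] with ρ hρ using pow_nonneg hρ.1.le k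

section NormedSpace

variable {E F : Type*} [NormedAddCommGroup E] [NormedSpace ℝ E] [NormedAddCommGroup F]
  [NormedSpace ℝ F]

theorem norm_smul_of_mem_unitSphere {ρ : ℝ} (hρ : 0 < ρ) (ω : sphere (0 : E) 1) :
    ‖ρ • (ω : E)‖ = ρ := by
  rw [norm_smul, norm_eq_of_mem_sphere ω, mul_one, Real.norm_of_nonneg hρ.le]

theorem add_div_norm_smul_sub_mem_segment (x y : E) {t : ℝ} (ht : t ∈ Icc 0 ‖y - x‖) :
    x + (t / ‖y - x‖) • (y - x) ∈ segment ℝ x y := by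
  rw [segment_eq_image']
  exact ⟨t / ‖y - x‖,
    ⟨div_nonneg ht.1 (norm_nonneg _), div_le_one_of_le₀ ht.2 (norm_nonneg _)⟩, rfl⟩

theorem enorm_sub_le_lintegral_enorm_fderiv_ray {u : E → F} {U : Set E} (hU : IsOpen U)
    (hu : ContDiffOn ℝ 1 u U) {x y : E} (hxy : segment ℝ x y ⊆ U) :
    ‖u y - u x‖ₑ ≤ ∫⁻ t in Ioc 0 ‖y - x‖, ‖fderiv ℝ u (x + (t / ‖y - x‖) • (y - x))‖ₑ := by
  rcases eq_or_ne y x with rfl | hne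
  · simp
  set ρ := ‖y - x‖
  have hρ : 0 < ρ := norm_sub_pos_iff.2 hne
  set γ : ℝ → E := fun t => x + (t / ρ) • (y - x)
  have hγU : MapsTo γ (Icc 0 ρ) U := fun t ht => hxy (add_div_norm_smul_sub_mem_segment x y ht)
  have hγ : ∀ t, HasDerivAt γ (ρ⁻¹ • (y - x)) t := fun t => by
    simpa [γ, div_eq_mul_inv] using
      ((hasDerivAt_id t).div_const ρ).smul_const (y - x) |>.const_add x
  have hDu : ContinuousOn (fun t => ‖fderiv ℝ u (γ t)‖) (Icc 0 ρ) :=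
    ((hu.continuousOn_fderiv_of_isOpen hU le_rfl).comp (by fun_prop) hγU).norm
  have hdiff : ∀ t ∈ Icc 0 ρ, HasDerivAt (u ∘ γ) (fderiv ℝ u (γ t) (ρ⁻¹ • (y - x))) t :=
    fun t ht => ((hu.differentiableOn one_ne_zero _ (hγU ht)).differentiableAt
        (hU.mem_nhds (hγU ht))).hasFDerivAt.comp_hasDerivAt t (hγ t)
  have hbound : ‖u (γ ρ) - u (γ 0)‖ ≤ ∫ t in 0..ρ, ‖fderiv ℝ u (γ t)‖ := by
    refine norm_sub_le_integral_of_norm_deriv_le_of_le hρ.le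
      (hu.continuousOn.comp (by fun_prop) hγU)
      (fun t ht => (hdiff t (Ioo_subset_Icc_self ht)).differentiableAt.differentiableWithinAt)
      (Filter.Eventually.of_forall fun t ht => ?_)
      (hDu.intervalIntegrable_of_Icc hρ.le)
    rw [(hdiff t (Ioo_subset_Icc_self ht)).deriv]
    refine ((fderiv ℝ u (γ t)).le_opNorm _).trans_eq ?_
    rw [norm_smul, norm_inv, norm_norm, inv_mul_cancel₀ hρ.ne', mul_one]
  have hγρ : γ ρ = y := by simp [γ, div_self hρ.ne']
  have hγ0 : γ 0 = x := by simp [γ]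
  rw [hγρ, hγ0, intervalIntegral.integral_of_le hρ.le] at hbound
  calc ‖u y - u x‖ₑ ≤ ENNReal.ofReal (∫ t in Ioc 0 ρ, ‖fderiv ℝ u (γ t)‖) := by
        rw [← ofReal_norm]
        exact ENNReal.ofReal_le_ofReal hbound
    _ = _ := by
        rw [ofReal_integral_eq_lintegral_ofReal
          (hDu.integrableOn_Icc.mono_set Ioc_subset_Icc_self)
          (Filter.Eventually.of_forall fun t => norm_nonneg _)]
        simp only [ofReal_norm, γ]

end NormedSpace

theorem measurable_lintegral_Ioc_norm_sub {E : Type*} [NormedAddCommGroup E] [MeasurableSpace E]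
    [BorelSpace E] (x : E) {G : E → ℝ → ℝ≥0∞} (hG : Measurable (Function.uncurry G)) :
    Measurable fun y => ∫⁻ t in Ioc 0 ‖y - x‖, G y t := by
  have hs : MeasurableSet {p : E × ℝ | p.2 ∈ Ioc 0 ‖p.1 - x‖} :=
    (measurableSet_lt measurable_const measurable_snd).inter
      (measurableSet_le measurable_snd (by fun_prop))
  convert (hG.indicator hs).lintegral_prod_right' (ν := volume) using 2 with y
  rw [← lintegral_indicator measurableSet_Ioc]
  rfl

section AddHaar

variable {E F : Type*} [NormedAddCommGroup E] [NormedSpace ℝ E] [FiniteDimensional ℝ E]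
  [MeasurableSpace E] [BorelSpace E] [Nontrivial E] (μ : Measure E) [μ.IsAddHaarMeasure]
  [NormedAddCommGroup F] [NormedSpace ℝ F]

theorem lintegral_eq_lintegral_sphere_lintegral_Ioi (x : E) {f : E → ℝ≥0∞} (hf : Measurable f) :
    ∫⁻ z, f z ∂μ = ∫⁻ ω, (∫⁻ ρ in Ioi (0 : ℝ),
      ENNReal.ofReal (ρ ^ (finrank ℝ E - 1)) * f (x + ρ • (ω : E))) ∂μ.toSphere := by
  have hg : Measurable fun p : sphere (0 : E) 1 × Ioi (0 : ℝ) => f (x + (p.2 : ℝ) • (p.1 : E)) :=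
    by fun_prop
  calc ∫⁻ z, f z ∂μ = ∫⁻ z : ({0}ᶜ : Set E), f (x + z) ∂μ.comap (↑) := by
        rw [← lintegral_add_left_eq_self f x,
          lintegral_subtype_comap (measurableSet_singleton _).compl (fun z => f (x + z)),
          restrict_compl_singleton]
    _ = ∫⁻ p, f (x + (p.2 : ℝ) • (p.1 : E))
          ∂μ.toSphere.prod (volumeIoiPow (finrank ℝ E - 1)) := by
        rw [← (measurePreserving_homeomorphUnitSphereProd μ).lintegral_comp_emb
          (homeomorphUnitSphereProd E).measurableEmbedding]
        refine lintegral_congr fun z => ?_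
        rw [← homeomorphUnitSphereProd_symm_apply_coe, Homeomorph.symm_apply_apply]
    _ = _ := by
        rw [lintegral_prod _ hg.aemeasurable]
        refine lintegral_congr fun ω => ?_
        rw [volumeIoiPow, lintegral_withDensity_eq_lintegral_mul _ (by fun_prop) (by fun_prop),
          ← lintegral_subtype_comap measurableSet_Ioi]
        rfl

theorem lintegral_closedBall_lintegral_ray_le (x : E) {W : E → ℝ≥0∞} (hW : Measurable W) {R : ℝ}
    (hR : 0 ≤ R) :
    ∫⁻ y in closedBall x R, (∫⁻ t in Ioc 0 ‖y - x‖, W (x + (t / ‖y - x‖) • (y - x))) ∂μ ≤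
      ENNReal.ofReal (R ^ finrank ℝ E / finrank ℝ E) *
        ∫⁻ z, W z / ‖z - x‖ₑ ^ (finrank ℝ E - 1) ∂μ := by
  set n := finrank ℝ E
  have hn : n - 1 + 1 = n := Nat.sub_add_cancel finrank_pos
  have hpow : Measurable fun ρ : ℝ => ENNReal.ofReal (ρ ^ (n - 1)) := by fun_prop
  have hray : Measurable fun y => ∫⁻ t in Ioc 0 ‖y - x‖, W (x + (t / ‖y - x‖) • (y - x)) :=
    measurable_lintegral_Ioc_norm_sub x (by fun_prop)
  rw [← lintegral_indicator measurableSet_closedBall,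
    lintegral_eq_lintegral_sphere_lintegral_Ioi μ x (hray.indicator measurableSet_closedBall),
    lintegral_eq_lintegral_sphere_lintegral_Ioi μ x (by fun_prop),
    ← lintegral_const_mul' _ _ ENNReal.ofReal_ne_top]
  refine lintegral_mono fun ω => ?_
  calc ∫⁻ ρ in Ioi 0, ENNReal.ofReal (ρ ^ (n - 1)) * (closedBall x R).indicator
          (fun y => ∫⁻ t in Ioc 0 ‖y - x‖, W (x + (t / ‖y - x‖) • (y - x))) (x + ρ • (ω : E))
      ≤ ∫⁻ ρ in Ioi 0, (Ioc 0 R).indicator (fun ρ => ENNReal.ofReal (ρ ^ (n - 1))) ρ *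
          ∫⁻ t in Ioi (0 : ℝ), W (x + t • (ω : E)) := by
        refine setLIntegral_mono' measurableSet_Ioi fun ρ (hρ : 0 < ρ) => ?_
        have hnorm := norm_smul_of_mem_unitSphere hρ ω
        by_cases hρR : ρ ≤ R
        · rw [indicator_of_mem (by simpa [hnorm] using hρR),
            indicator_of_mem (show ρ ∈ Ioc 0 R from ⟨hρ, hρR⟩)]
          -- `(t / ρ) • (ρ • ω) = t • ω`: the segment is an initial piece of the ray through `ω`
          simp only [add_sub_cancel_left, hnorm, smul_smul, div_mul_cancel₀ _ hρ.ne']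
          gcongr
          exact Ioc_subset_Ioi_self
        · rw [indicator_of_notMem (by simpa [hnorm] using hρR), mul_zero]
          exact zero_le
    _ = ENNReal.ofReal (R ^ n / n) * ∫⁻ ρ in Ioi 0,
          ENNReal.ofReal (ρ ^ (n - 1)) *
            (W (x + ρ • (ω : E)) / ‖x + ρ • (ω : E) - x‖ₑ ^ (n - 1)) := by
        rw [lintegral_mul_const _ (hpow.indicator measurableSet_Ioc),
          lintegral_indicator measurableSet_Ioc,
          Measure.restrict_restrict measurableSet_Ioc, Ioc_inter_Ioi, max_self,
          lintegral_Ioc_ofReal_pow hR, ← Nat.cast_add_one, hn]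
        congr 1
        refine setLIntegral_congr_fun measurableSet_Ioi fun ρ (hρ : 0 < ρ) => ?_
        rw [add_sub_cancel_left, ← ofReal_norm, norm_smul_of_mem_unitSphere hρ ω,
          ← ENNReal.ofReal_pow hρ.le, ENNReal.mul_div_cancel (by simp [hρ]) ENNReal.ofReal_ne_top]

theorem setLIntegral_closedBall_inv_enorm_sub_pow_lt_top (x : E) (R : ℝ) :
    ∫⁻ z in closedBall x R, (‖z - x‖ₑ ^ (finrank ℝ E - 1))⁻¹ ∂μ < ⊤ := by
  set n := finrank ℝ E
  rw [← lintegral_indicator measurableSet_closedBall,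
    lintegral_eq_lintegral_sphere_lintegral_Ioi μ x ((by fun_prop : Measurable
      fun z : E => (‖z - x‖ₑ ^ (n - 1))⁻¹).indicator measurableSet_closedBall)]
  calc _ ≤ ∫⁻ _ : sphere (0 : E) 1, ENNReal.ofReal R ∂μ.toSphere := by
        refine lintegral_mono fun ω => ?_
        rw [show ENNReal.ofReal R = volume (Ioc 0 R) by simp,
          ← lintegral_indicator_one measurableSet_Ioc, ← lintegral_indicator measurableSet_Ioi]
        refine lintegral_mono fun ρ => ?_
        by_cases hρ : 0 < ρ
        · have hnorm := norm_smul_of_mem_unitSphere hρ ω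
          by_cases hρR : ρ ≤ R
          · rw [indicator_of_mem (show ρ ∈ Ioi 0 from hρ),
              indicator_of_mem (by simpa [hnorm] using hρR),
              indicator_of_mem (show ρ ∈ Ioc 0 R from ⟨hρ, hρR⟩), add_sub_cancel_left,
              ← ofReal_norm, hnorm, ← ENNReal.ofReal_pow hρ.le,
              ENNReal.mul_inv_cancel (by simp [hρ]) ENNReal.ofReal_ne_top]
            rfl
          · rw [indicator_of_mem (show ρ ∈ Ioi 0 from hρ),
              indicator_of_notMem (by simpa [hnorm] using hρR), mul_zero]
            exact zero_le
        · rw [indicator_of_notMem (show ρ ∉ Ioi 0 from hρ)]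
          exact zero_le
    _ < ⊤ := by
        rw [lintegral_const]
        exact ENNReal.mul_lt_top ENNReal.ofReal_lt_top (measure_lt_top _ _)

theorem setLIntegral_enorm_div_enorm_sub_pow_lt_top {G : Type*} [NormedAddCommGroup G]
    {Ω : Set E} (hΩ : IsCompact Ω) {g : E → G} (hg : ContinuousOn g Ω) (x : E) :
    ∫⁻ z in Ω, ‖g z‖ₑ / ‖z - x‖ₑ ^ (finrank ℝ E - 1) ∂μ < ⊤ := by
  obtain ⟨M, hM⟩ := hΩ.exists_bound_of_continuousOn hg
  obtain ⟨R, hR⟩ := hΩ.isBounded.subset_closedBall x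
  calc ∫⁻ z in Ω, ‖g z‖ₑ / ‖z - x‖ₑ ^ (finrank ℝ E - 1) ∂μ
      ≤ ∫⁻ z in Ω, ENNReal.ofReal M * (‖z - x‖ₑ ^ (finrank ℝ E - 1))⁻¹ ∂μ := by
        refine setLIntegral_mono (by fun_prop) fun z hz => ?_
        rw [div_eq_mul_inv, ← ofReal_norm]
        gcongr
        exact hM z hz
    _ ≤ ∫⁻ z in closedBall x R, ENNReal.ofReal M * (‖z - x‖ₑ ^ (finrank ℝ E - 1))⁻¹ ∂μ :=
        lintegral_mono_set hR
    _ < ⊤ := by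
        rw [lintegral_const_mul' _ _ ENNReal.ofReal_ne_top]
        exact ENNReal.mul_lt_top ENNReal.ofReal_lt_top
          (setLIntegral_closedBall_inv_enorm_sub_pow_lt_top μ x R)

theorem setLIntegral_enorm_sub_le_of_convex [CompleteSpace F] {Ω U : Set E} (hΩ : Convex ℝ Ω)
    (hΩb : Bornology.IsBounded Ω) (hΩm : MeasurableSet Ω) (hU : IsOpen U) (hΩU : Ω ⊆ U)
    {u : E → F} (hu : ContDiffOn ℝ 1 u U) {x : E} (hx : x ∈ Ω) :
    ∫⁻ y in Ω, ‖u x - u y‖ₑ ∂μ ≤ ENNReal.ofReal (diam Ω ^ finrank ℝ E / finrank ℝ E) *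
      ∫⁻ z in Ω, ‖fderiv ℝ u z‖ₑ / ‖z - x‖ₑ ^ (finrank ℝ E - 1) ∂μ := by
  set W := Ω.indicator fun z => ‖fderiv ℝ u z‖ₑ
  have hW : Measurable W := (measurable_fderiv ℝ u).enorm.indicator hΩm
  calc ∫⁻ y in Ω, ‖u x - u y‖ₑ ∂μ
      ≤ ∫⁻ y in Ω, (∫⁻ t in Ioc 0 ‖y - x‖, W (x + (t / ‖y - x‖) • (y - x))) ∂μ := by
        refine setLIntegral_mono' hΩm fun y hy => ?_
        have hseg : segment ℝ x y ⊆ Ω := hΩ.segment_subset hx hy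
        rw [enorm_sub_rev]
        refine (enorm_sub_le_lintegral_enorm_fderiv_ray hU hu (hseg.trans hΩU)).trans
          (setLIntegral_mono' measurableSet_Ioc fun t ht => ?_)
        exact (indicator_of_mem (hseg (add_div_norm_smul_sub_mem_segment x y
          (Ioc_subset_Icc_self ht))) fun z => ‖fderiv ℝ u z‖ₑ).ge
    _ ≤ ∫⁻ y in closedBall x (diam Ω), (∫⁻ t in Ioc 0 ‖y - x‖,
          W (x + (t / ‖y - x‖) • (y - x))) ∂μ :=
        lintegral_mono_set fun y hy => mem_closedBall.2 (dist_le_diam_of_mem hΩb hy hx)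
    _ ≤ ENNReal.ofReal (diam Ω ^ finrank ℝ E / finrank ℝ E) *
          ∫⁻ z, W z / ‖z - x‖ₑ ^ (finrank ℝ E - 1) ∂μ :=
        lintegral_closedBall_lintegral_ray_le μ x hW diam_nonneg
    _ = _ := by
        rw [← lintegral_indicator hΩm]
        congr 1
        refine lintegral_congr fun z => ?_
        by_cases hz : z ∈ Ω <;> simp [W, hz]

theorem norm_sub_setAverage_le_of_convex [CompleteSpace F] {Ω U : Set E} (hΩ : Convex ℝ Ω)
    (hΩc : IsCompact Ω) (hμΩ : μ Ω ≠ 0) (hU : IsOpen U) (hΩU : Ω ⊆ U) {u : E → F}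
    (hu : ContDiffOn ℝ 1 u U) {x : E} (hx : x ∈ Ω) :
    ‖u x - ⨍ y in Ω, u y ∂μ‖ ≤ diam Ω ^ finrank ℝ E / (finrank ℝ E * μ.real Ω) *
      ∫ y in Ω, ‖fderiv ℝ u y‖ / ‖x - y‖ ^ (finrank ℝ E - 1) ∂μ := by
  set n := finrank ℝ E
  set I := ∫⁻ z in Ω, ‖fderiv ℝ u z‖ₑ / ‖z - x‖ₑ ^ (n - 1) ∂μ
  have hμΩ' : μ Ω ≠ ⊤ := hΩc.measure_lt_top.ne
  have hI : I < ⊤ := setLIntegral_enorm_div_enorm_sub_pow_lt_top μ hΩc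
    ((hu.continuousOn_fderiv_of_isOpen hU le_rfl).mono hΩU) x
  have hIreal : ∫ y in Ω, ‖fderiv ℝ u y‖ / ‖x - y‖ ^ (n - 1) ∂μ = I.toReal := by
    -- at `y = x` the `ℝ≥0∞` quotient may be `⊤`, whose `toReal` is `0`, like the real `a / 0`
    rw [← integral_toReal (by fun_prop) (ae_lt_top (by fun_prop) hI.ne)]
    simp only [ENNReal.toReal_div, ENNReal.toReal_pow, toReal_enorm, norm_sub_rev x]
  have hint : IntegrableOn u Ω μ := (hu.continuousOn.mono hΩU).integrableOn_compact hΩc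
  have havg : u x - ⨍ y in Ω, u y ∂μ = ⨍ y in Ω, (u x - u y) ∂μ := by
    rw [setAverage_eq μ (fun y => u x - u y),
      integral_sub (integrableOn_const (C := u x) hμΩ') hint, smul_sub, ← setAverage_eq,
      ← setAverage_eq, setAverage_const hμΩ hμΩ']
  have hμreal : 0 < μ.real Ω := ENNReal.toReal_pos hμΩ hμΩ'
  calc ‖u x - ⨍ y in Ω, u y ∂μ‖
      ≤ (μ.real Ω)⁻¹ * ∫ y in Ω, ‖u x - u y‖ ∂μ := by
        rw [havg, setAverage_eq, norm_smul, Real.norm_of_nonneg (inv_nonneg.2 hμreal.le)]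
        gcongr
        exact norm_integral_le_integral_norm _
    _ = (μ.real Ω)⁻¹ * (∫⁻ y in Ω, ‖u x - u y‖ₑ ∂μ).toReal := by
        rw [integral_norm_eq_lintegral_enorm (f := fun y => u x - u y)
          (aestronglyMeasurable_const.sub hint.1)]
    _ ≤ (μ.real Ω)⁻¹ * (ENNReal.ofReal (diam Ω ^ n / n) * I).toReal := by
        gcongr
        · exact ENNReal.mul_ne_top ENNReal.ofReal_ne_top hI.ne
        · exact setLIntegral_enorm_sub_le_of_convex μ hΩ hΩc.isBounded hΩc.measurableSet
            hU hΩU hu hx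
    _ = _ := by
        rw [ENNReal.toReal_mul, ENNReal.toReal_ofReal (by positivity), hIreal]
        field_simp

end AddHaar

end PointwisePoincare

/-- Pointwise Poincaré estimate (Gilbarg–Trudinger Lemma 7.16, n = 2): if `u` is C¹
on a neighborhood of the closed ball `B = B(x₀,r) ⊂ ℝ²`, then for every `x ∈ B`,
`|u(x) - u_B| ≤ 2 ∫_B |∇u(y)|/|x-y| dy`, where `u_B = (1/(πr²)) ∫_B u`. -/
theorem stmt5 (x₀ : E2) (r : ℝ) (hr : 0 < r)
    (U : Set E2) (hU : IsOpen U) (hBU : closedBall x₀ r ⊆ U)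
    (u : E2 → ℝ) (hu : ContDiffOn ℝ 1 u U)
    (x : E2) (hx : x ∈ closedBall x₀ r) :
    |u x - (1 / (Real.pi * r ^ 2)) * ∫ y in closedBall x₀ r, u y| ≤
      2 * ∫ y in closedBall x₀ r, ‖fderiv ℝ u y‖ / ‖x - y‖ := by
  have hvol : volume.real (closedBall x₀ r) = Real.pi * r ^ 2 := by
    simp [Measure.real, hr.le, Real.pi_pos.le, mul_comm]
  have hpoincare := norm_sub_setAverage_le_of_convex volume (convex_closedBall x₀ r)
    (isCompact_closedBall x₀ r) (by simp [hr, Real.pi_pos]) hU hBU hu hx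
  simp only [finrank_euclideanSpace_fin, setAverage_eq, hvol, smul_eq_mul, Real.norm_eq_abs,
    pow_one, Nat.add_one_sub_one, Nat.cast_ofNat, one_div] at hpoincare ⊢
  refine hpoincare.trans (mul_le_mul_of_nonneg_right ?_ (by positivity))
  have hdiam : diam (closedBall x₀ r) ^ 2 ≤ (2 * r) ^ 2 :=
    pow_le_pow_left₀ diam_nonneg (diam_closedBall hr.le) 2
  rw [div_le_iff₀ (by positivity)]
  nlinarith [Real.pi_gt_three, mul_pos hr hr]
end
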